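/- Let k ≥ 1, n ≥ k, i ≥ 1 be integers and let σ ⊆ {1,…,n-k+1} with |σ| = i. Then supp_k(σ) is a minimal element, with respect to set inclusion, of the family {supp_k(τ) : τ ⊆ {1,…,n-k+1}, |τ| = i} if and only if σ is gap-admissible for k, i.e. σ has no gap of size 1, 2, …, or k-1. -/
import Mathlib


/-- `suppK k σ = ⋃_{a ∈ σ} {a, a+1, …, a+k-1}`: the indices of the variables dividing
the lcm of the consecutive generators `x_a ⋯ x_{a+k-1}`, `a ∈ σ`. -/
def suppK (k : ℕ) (σ : Finset ℕ) : Finset ℕ :=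
  σ.biUnion fun a => Finset.Ico a (a + k)

/-- `a < b` are consecutive elements of `σ`: both lie in `σ` and no element of `σ`
lies strictly between them. -/
def ConsecutiveIn (σ : Finset ℕ) (a b : ℕ) : Prop :=
  a ∈ σ ∧ b ∈ σ ∧ a < b ∧ ∀ c ∈ σ, ¬(a < c ∧ c < b)

/-- `σ` is gap-admissible for `k`: every gap of `σ` (the size `b - a - 1 ≥ 1` for
consecutive elements `a < b`) has size at least `k`. -/
def GapAdmissible (k : ℕ) (σ : Finset ℕ) : Prop :=
  ∀ a b : ℕ, ConsecutiveIn σ a b → b = a + 1 ∨ k ≤ b - a - 1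

lemma mem_suppK {k : ℕ} {σ : Finset ℕ} {x : ℕ} :
    x ∈ suppK k σ ↔ ∃ a ∈ σ, a ≤ x ∧ x < a + k := by
  simp [suppK, Finset.mem_Ico]

/-- If `σ` is gap-admissible and the whole window `[a, a+k)` lies in `suppK k σ`,
then `a ∈ σ`. -/
lemma gapAdmissible_mem {k : ℕ} (hk : 1 ≤ k) {σ : Finset ℕ}
    (hga : GapAdmissible k σ) {a : ℕ}
    (h : Finset.Ico a (a + k) ⊆ suppK k σ) : a ∈ σ := by
  classical
  by_contra ha
  -- `a` itself is covered by some `c ∈ σ`, `c < a`.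
  obtain ⟨c, hcσ, hc1, hc2⟩ :=
    mem_suppK.mp (h (Finset.mem_Ico.mpr ⟨le_refl a, by omega⟩))
  have hclt : c < a := lt_of_le_of_ne hc1 (fun e => ha (e ▸ hcσ))
  set L := σ.filter (· < a) with hL
  have hLne : L.Nonempty := ⟨c, by simp [hL, hcσ, hclt]⟩
  set A := L.max' hLne with hA
  have hAmem := Finset.mem_filter.mp (L.max'_mem hLne)
  have hAσ : A ∈ σ := hAmem.1
  have hAlt : A < a := hAmem.2
  have hAmax : ∀ d ∈ σ, d < a → d ≤ A := fun d hd hda =>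
    L.le_max' d (by simp [hL, hd, hda])
  have hcA : c ≤ A := hAmax c hcσ hclt
  have hAk : a < A + k := by omega
  -- the point `a + k - 1` is covered by some `d ∈ σ`, `d > a`.
  obtain ⟨d, hdσ, hd1, hd2⟩ :=
    mem_suppK.mp (h (Finset.mem_Ico.mpr
      (⟨by omega, by omega⟩ : a ≤ a + k - 1 ∧ a + k - 1 < a + k)))
  have hdgt : a < d := by
    have hda : a ≤ d := by omega
    exact lt_of_le_of_ne hda (fun e => ha (e ▸ hdσ))
  set U := σ.filter (fun x => a < x) with hU
  have hUne : U.Nonempty := ⟨d, by simp [hU, hdσ, hdgt]⟩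
  set B := U.min' hUne with hB
  have hBmem := Finset.mem_filter.mp (U.min'_mem hUne)
  have hBσ : B ∈ σ := hBmem.1
  have hBgt : a < B := hBmem.2
  have hBmin : ∀ e ∈ σ, a < e → B ≤ e := fun e he hea =>
    U.min'_le e (by simp [hU, he, hea])
  -- the point `A + k` is covered by some `e ∈ σ` with `B ≤ e ≤ A + k`.
  obtain ⟨e, heσ, he1, he2⟩ :=
    mem_suppK.mp (h (Finset.mem_Ico.mpr (⟨by omega, by omega⟩ : a ≤ A + k ∧ A + k < a + k)))
  have heA : A < e := by omega
  have hea : a < e := by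
    rcases lt_trichotomy e a with h' | h' | h'
    · exact absurd (hAmax e heσ h') (by omega)
    · exact absurd (h' ▸ heσ) ha
    · exact h'
  have hBe : B ≤ e := hBmin e heσ hea
  have hcons : ConsecutiveIn σ A B := by
    refine ⟨hAσ, hBσ, by omega, ?_⟩
    intro x hx ⟨hx1, hx2⟩
    rcases lt_trichotomy x a with h' | h' | h'
    · exact absurd (hAmax x hx h') (by omega)
    · exact ha (h' ▸ hx)
    · exact absurd (hBmin x hx h') (by omega)
  rcases hga A B hcons with h' | h' <;> omega

/-- **Theorem 2.** For `σ ⊆ {1,…,n-k+1}` with `|σ| = i`, the support `suppK k σ` is a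
minimal element (w.r.t. inclusion) of the family
`{suppK k τ : τ ⊆ {1,…,n-k+1}, |τ| = i}` if and only if `σ` is gap-admissible for `k`,
i.e. `σ` has no gap of size `1, 2, …, k-1`. -/
theorem suppK_minimal_iff_gapAdmissible (k n i : ℕ) (hk : 1 ≤ k) (hn : k ≤ n) (hi : 1 ≤ i)
    (σ : Finset ℕ) (hσ : σ ⊆ Finset.Icc 1 (n - k + 1)) (hcard : σ.card = i) :
    (∀ τ : Finset ℕ, τ ⊆ Finset.Icc 1 (n - k + 1) → τ.card = i →
        ¬ suppK k τ ⊂ suppK k σ) ↔ GapAdmissible k σ := by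
  classical
  constructor
  · -- minimal → gap-admissible
    intro hmin A B hcons
    by_contra hbad
    push_neg at hbad
    obtain ⟨hne, hgap⟩ := hbad
    obtain ⟨hAσ, hBσ, hAB, hbet⟩ := hcons
    have hA1 : 1 ≤ A := (Finset.mem_Icc.mp (hσ hAσ)).1
    have hB2 : A + 2 ≤ B := by omega
    have hBk : B ≤ A + k := by omega
    -- M : the least element of σ, ≥ B, followed by a gap of length > k
    set s := σ.filter (fun m => B ≤ m ∧ ∀ d ∈ σ, d ≤ m ∨ m + k < d) with hs
    have hσne : σ.Nonempty := ⟨B, hBσ⟩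
    have hsne : s.Nonempty := by
      refine ⟨σ.max' hσne, Finset.mem_filter.mpr ⟨σ.max'_mem hσne, σ.le_max' B hBσ, ?_⟩⟩
      intro d hd; left; exact σ.le_max' d hd
    set M := s.min' hsne with hM
    have hMmem := Finset.mem_filter.mp (s.min'_mem hsne)
    have hMσ : M ∈ σ := hMmem.1
    have hMB : B ≤ M := hMmem.2.1
    have hMprop : ∀ d ∈ σ, d ≤ M ∨ M + k < d := hMmem.2.2
    have hMmin : ∀ m ∈ σ, B ≤ m → (∀ d ∈ σ, d ≤ m ∨ m + k < d) → M ≤ m := by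
      intro m hm h1 h2; exact s.min'_le m (Finset.mem_filter.mpr ⟨hm, h1, h2⟩)
    set lo := σ.filter (fun c => ¬ (B ≤ c ∧ c ≤ M)) with hlo
    set hi' := σ.filter (fun c => B ≤ c ∧ c ≤ M) with hhi
    set τ := lo ∪ hi'.image (· - 1) with hτ
    -- key coverage fact
    have hpred : ∀ c ∈ σ, B ≤ c → c ≤ M → ∃ d ∈ σ, d ≤ c - 1 ∧ c - 1 < d + k := by
      intro c hcσ hBc hcM
      rcases eq_or_lt_of_le hBc with h' | h'
      · exact ⟨A, hAσ, by omega, by omega⟩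
      · set W := σ.filter (fun x => B ≤ x ∧ x < c) with hW
        have hWne : W.Nonempty := ⟨B, by simp [hW, hBσ]; omega⟩
        set d₀ := W.max' hWne with hd₀
        have hd₀mem := Finset.mem_filter.mp (W.max'_mem hWne)
        have hd₀σ : d₀ ∈ σ := hd₀mem.1
        have hd₀B : B ≤ d₀ := hd₀mem.2.1
        have hd₀c : d₀ < c := hd₀mem.2.2
        have hd₀max : ∀ x ∈ σ, B ≤ x → x < c → x ≤ d₀ := fun x hx h1 h2 =>
          W.le_max' x (by simp [hW, hx, h1, h2])
        by_cases hck : c ≤ d₀ + k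
        · exact ⟨d₀, hd₀σ, by omega, by omega⟩
        · exfalso
          have : M ≤ d₀ := by
            refine hMmin d₀ hd₀σ hd₀B ?_
            intro x hx
            by_contra hxc
            push_neg at hxc
            obtain ⟨h1, h2⟩ := hxc
            have hx1 : d₀ < x := by omega
            have := hd₀max x hx (by omega) (by omega)
            omega
          omega
    -- τ ⊆ Icc
    have hτsub : τ ⊆ Finset.Icc 1 (n - k + 1) := by
      intro x hx
      rcases Finset.mem_union.mp hx with hx | hx
      · exact hσ (Finset.mem_filter.mp hx).1
      · obtain ⟨c, hc, hcx⟩ := Finset.mem_image.mp hx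
        have hcmem := Finset.mem_filter.mp hc
        have := Finset.mem_Icc.mp (hσ hcmem.1)
        have hBc : B ≤ c := hcmem.2.1
        simp only [Finset.mem_Icc]
        omega
    -- disjointness
    have hBm1 : B - 1 ∉ σ := by
      intro h
      exact hbet (B - 1) h ⟨by omega, by omega⟩
    have hdisj : Disjoint lo (hi'.image (· - 1)) := by
      rw [Finset.disjoint_left]
      intro x hx hx'
      obtain ⟨hxσ, hxp⟩ := Finset.mem_filter.mp hx
      obtain ⟨c, hc, hcx⟩ := Finset.mem_image.mp hx'
      obtain ⟨hcσ, hBc, hcM⟩ := Finset.mem_filter.mp hc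
      have hcx' : c - 1 = x := hcx
      push_neg at hxp
      by_cases hxB : B ≤ x
      · exact absurd (hxp hxB) (by omega)
      · have hxb : x = B - 1 := by omega
        exact hBm1 (hxb ▸ hxσ)
    -- cardinality
    have hτcard : τ.card = i := by
      have h1 : (hi'.image (· - 1)).card = hi'.card := by
        refine Finset.card_image_of_injOn ?_
        intro x hx y hy hxy
        have hx' := (Finset.mem_filter.mp hx).2.1
        have hy' := (Finset.mem_filter.mp hy).2.1
        have hxy' : x - 1 = y - 1 := hxy
        omega
      have h2 : lo.card + hi'.card = σ.card := by
        rw [hlo, hhi, add_comm]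
        exact Finset.card_filter_add_card_filter_not (p := fun c => B ≤ c ∧ c ≤ M)
      rw [hτ, Finset.card_union_of_disjoint hdisj, h1]
      omega
    -- suppK τ ⊆ suppK σ
    have hsub : suppK k τ ⊆ suppK k σ := by
      intro x hx
      obtain ⟨e, he, he1, he2⟩ := mem_suppK.mp hx
      rcases Finset.mem_union.mp he with he' | he'
      · exact mem_suppK.mpr ⟨e, (Finset.mem_filter.mp he').1, he1, he2⟩
      · obtain ⟨c, hc, hce⟩ := Finset.mem_image.mp he'
        obtain ⟨hcσ, hBc, hcM⟩ := Finset.mem_filter.mp hc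
        have hce' : c - 1 = e := hce
        by_cases hxc : c ≤ x
        · exact mem_suppK.mpr ⟨c, hcσ, hxc, by omega⟩
        · obtain ⟨d, hdσ, hd1, hd2⟩ := hpred c hcσ hBc hcM
          have hx' : x = c - 1 := by omega
          exact mem_suppK.mpr ⟨d, hdσ, by omega, by omega⟩
    -- strictness
    have hMk : M + k - 1 ∈ suppK k σ := mem_suppK.mpr ⟨M, hMσ, by omega, by omega⟩
    have hMk' : M + k - 1 ∉ suppK k τ := by
      intro h
      obtain ⟨e, he, he1, he2⟩ := mem_suppK.mp h
      rcases Finset.mem_union.mp he with he' | he'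
      · obtain ⟨heσ, hep⟩ := Finset.mem_filter.mp he'
        push_neg at hep
        rcases hMprop e heσ with h' | h'
        · have heM : e = M := by omega
          exact absurd (heM ▸ hMB) (by have := hep (by omega); omega)
        · omega
      · obtain ⟨c, hc, hce⟩ := Finset.mem_image.mp he'
        obtain ⟨hcσ, hBc, hcM⟩ := Finset.mem_filter.mp hc
        have hce' : c - 1 = e := hce
        omega
    exact hmin τ hτsub hτcard ((Finset.ssubset_iff_of_subset hsub).mpr
      ⟨M + k - 1, hMk, hMk'⟩)
  · -- gap-admissible → minimal
    intro hga τ hτsub hτcard hss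
    have hτσ : τ ⊆ σ := by
      intro a haτ
      refine gapAdmissible_mem hk hga (fun x hx => ?_)
      have hx' := Finset.mem_Ico.mp hx
      exact hss.subset (mem_suppK.mpr ⟨a, haτ, hx'.1, hx'.2⟩)
    have heq : τ = σ := Finset.eq_of_subset_of_card_le hτσ (by omega)
    exact hss.ne (by rw [heq])
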